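/- For every x ∈ ℕ^d and every j ∈ [d], the size satisfies n(g_j(x)) = n(x) + 1. -/

import Mathlib

namespace Spiral

/-- The size `n(x) = n₁ + ⋯ + n_d` of a configuration `x ∈ ℕ^d`. -/
def size {d : ℕ} (x : Fin d → ℕ) : ℕ := ∑ i, x i

/-- The weight `W(x) = Σ_{i<j} (max(0, x_j − x_i) + max(0, x_i − x_j − 1))`
(truncated ℕ-subtraction realizes the `max(0,·)`). -/
def weight {d : ℕ} (x : Fin d → ℕ) : ℕ :=
  ∑ i : Fin d, ∑ j : Fin d, if i < j then (x j - x i) + (x i - x j - 1) else 0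

/-- The configuration `x` as a set of points of `[d] × ℕ`: the point `(i, n)` (seat `i`
0-indexed, level `n`) is encoded as the natural number `n*d + i`. The usual order on the
encodings is exactly the height order `≺` (height `h(i,n) = n + i/d`), and the spiral
shift `δ + s/d` is encoded as `+ s`. -/
def pts (d : ℕ) (x : Fin d → ℕ) : Finset ℕ :=
  Finset.image (fun i : Fin d => x i * d + i.val) Finset.univ

/-- The points of `x` listed in increasing height order: `δ¹(x), …, δ^d(x)`. -/
def sortedPts (d : ℕ) (x : Fin d → ℕ) : List ℕ :=
  (pts d x).sort (· ≤ ·)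

/-- The lowest point strictly above `p` (along the spiral) whose seat lies in `S`. -/
noncomputable def nextPt (d : ℕ) (S : Finset ℕ) (p : ℕ) : ℕ :=
  sInf {q : ℕ | p < q ∧ q % d ∈ S}

/-- The spiral shifting operator `g_j` (for `1 ≤ j ≤ d`): it fixes the lowest `j - 1`
points `δ¹(x), …, δ^{j-1}(x)` and moves each remaining point `δ^k(x)` (`k ≥ j`) to
`δ^k(x) + s_k/d`, where `s_k` is the minimal positive integer such that the seat of
`δ^k(x) + s_k/d` lies in `{i(δ^j(x)), …, i(δ^d(x))}`. The resulting configuration is read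
off from the new point set (which has exactly one point per seat). -/
noncomputable def gOp (d : ℕ) (j : ℕ) (x : Fin d → ℕ) : Fin d → ℕ := fun i =>
  let L := sortedPts d x
  let low := L.take (j - 1)
  let high := L.drop (j - 1)
  let S : Finset ℕ := high.toFinset.image (· % d)
  let Q : Finset ℕ := low.toFinset ∪ (high.map (nextPt d S)).toFinset
  ∑ q ∈ Q.filter (fun q => q % d = i.val), q / d

/-- `g^a := g₁^{a₁} ∘ ⋯ ∘ g_d^{a_d}` (here `a i` is the exponent of `g_{i+1}`). -/
noncomputable def gIter (d : ℕ) (a : Fin d → ℕ) (x : Fin d → ℕ) : Fin d → ℕ :=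
  (List.finRange d).foldr (fun j y => (gOp d (j.val + 1))^[a j] y) x

end Spiral

/-!
Encode the point `(i, n)` as `n * d + i`, so that its level is the quotient by `d` and its seat
the remainder. Let `S` be the set of seats of the moved points. Moving a point to the next point
with seat in `S` keeps its level, unless no seat of `S` lies above its own seat, in which case it
wraps around to the next level. Exactly one moved point sits on the highest seat of `S`, so the
total level grows by exactly one.
-/

namespace Spiral

section nextPt

variable {d : ℕ} {S : Finset ℕ}

lemma nextPt_le {p q : ℕ} (hpq : p < q) (hq : q % d ∈ S) : nextPt d S p ≤ q :=
  Nat.sInf_le ⟨hpq, hq⟩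

lemma mul_add_mod_mem {r : ℕ} (hS : ∀ r ∈ S, r < d) (hr : r ∈ S) (a : ℕ) :
    (a * d + r) % d ∈ S := by
  rwa [Nat.add_comm, Nat.add_mul_mod_self_right, Nat.mod_eq_of_lt (hS r hr)]

lemma lt_nextPt_and_mod_mem (hS : ∀ r ∈ S, r < d) (hne : S.Nonempty) (p : ℕ) :
    p < nextPt d S p ∧ nextPt d S p % d ∈ S := by
  obtain ⟨r, hr⟩ := hne
  have hrd := hS r hr
  have hp := Nat.div_add_mod' p d
  have hpd := Nat.mod_lt p (by omega : 0 < d)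
  have hnonempty : {q : ℕ | p < q ∧ q % d ∈ S}.Nonempty :=
    ⟨(p / d + 1) * d + r, by rw [Nat.add_mul]; omega, mul_add_mod_mem hS hr _⟩
  exact Nat.sInf_mem hnonempty

lemma nextPt_div (hS : ∀ r ∈ S, r < d) (hne : S.Nonempty) (p : ℕ) :
    nextPt d S p / d = p / d + if S.max' hne ≤ p % d then 1 else 0 := by
  obtain ⟨hlt, hmem⟩ := lt_nextPt_and_mod_mem hS hne p
  have hd : 0 < d := (Nat.zero_le _).trans_lt (hS _ hmem)
  have hp := Nat.div_add_mod' p d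
  have hq := Nat.div_add_mod' (nextPt d S p) d
  have hpd := Nat.mod_lt p hd
  have hmax := S.le_max' _ hmem
  split_ifs with h
  · have hupper : nextPt d S p ≤ (p / d + 1) * d + S.min' hne :=
      nextPt_le (by rw [Nat.add_mul]; omega) (mul_add_mod_mem hS (S.min'_mem hne) _)
    have hmin := hS _ (S.min'_mem hne)
    apply Nat.div_eq_of_lt_le
    · by_contra! hcon
      have : nextPt d S p / d = p / d := Nat.div_eq_of_lt_le (by omega) hcon
      rw [this] at hq
      omega
    · simp only [Nat.add_mul] at hupper ⊢
      omega
  · have hupper : nextPt d S p ≤ p / d * d + S.max' hne :=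
      nextPt_le (by omega) (mul_add_mod_mem hS (S.max'_mem hne) _)
    have hmaxd := hS _ (S.max'_mem hne)
    rw [Nat.add_zero]
    apply Nat.div_eq_of_lt_le
    · omega
    · rw [Nat.add_mul]
      omega

lemma strictMonoOn_nextPt (hS : ∀ r ∈ S, r < d) (hne : S.Nonempty) :
    StrictMonoOn (nextPt d S) {q | q % d ∈ S} :=
  fun _ _ b hb hab => (nextPt_le hab hb).trans_lt (lt_nextPt_and_mod_mem hS hne b).1

end nextPt

theorem sum_div_union_image_nextPt {d : ℕ} (hd : 0 < d) {A B : Finset ℕ} (hB : B.Nonempty)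
    (hinj : Set.InjOn (· % d) B) (hAB : ∀ a ∈ A, ∀ b ∈ B, a < b) :
    ∑ q ∈ A ∪ B.image (nextPt d (B.image (· % d))), q / d =
      ∑ q ∈ A ∪ B, q / d + 1 := by
  set S := B.image (· % d)
  have hS : ∀ r ∈ S, r < d := by
    simp only [S, Finset.mem_image]
    rintro _ ⟨b, -, rfl⟩
    exact Nat.mod_lt b hd
  have hne : S.Nonempty := hB.image _
  have hdisj : Disjoint A (B.image (nextPt d S)) := by
    simp only [Finset.disjoint_right, Finset.mem_image]
    rintro _ ⟨b, hb, rfl⟩ ha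
    exact (hAB _ ha b hb).not_ge (lt_nextPt_and_mod_mem hS hne b).1.le
  have hdisj' : Disjoint A B :=
    Finset.disjoint_right.2 fun b hb ha => (hAB b ha b hb).false
  have hnextInj : Set.InjOn (nextPt d S) B :=
    (strictMonoOn_nextPt hS hne).injOn.mono fun b hb => Finset.mem_image_of_mem (· % d) hb
  have hmax : ∀ r ∈ S, S.max' hne ≤ r ↔ r = S.max' hne :=
    fun r hr => ⟨(S.le_max' r hr).antisymm, Eq.ge⟩
  have hwrap : ∑ b ∈ B, (if S.max' hne ≤ b % d then 1 else 0) = 1 := by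
    rw [← Finset.sum_image (f := fun r => if S.max' hne ≤ r then 1 else 0) hinj,
      Finset.sum_congr rfl fun r hr => if_congr (hmax r hr) rfl rfl, Finset.sum_ite_eq',
      if_pos (S.max'_mem hne)]
  rw [Finset.sum_union hdisj, Finset.sum_union hdisj', Finset.sum_image hnextInj]
  simp only [nextPt_div hS hne, Finset.sum_add_distrib, hwrap, Nat.add_assoc]

lemma sum_fin_sum_filter_mod {M : Type*} [AddCommMonoid M] {d : ℕ} (hd : 0 < d)
    (Q : Finset ℕ) (f : ℕ → M) :
    ∑ i : Fin d, ∑ q ∈ Q.filter (fun q => q % d = i.val), f q = ∑ q ∈ Q, f q := by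
  rw [← Finset.sum_fiberwise_of_maps_to (t := Finset.univ)
    (g := fun q => (⟨q % d, Nat.mod_lt q hd⟩ : Fin d)) (fun _ _ => Finset.mem_univ _)]
  simp only [Fin.ext_iff]

section pts

variable {d : ℕ}

lemma mul_add_fin_mod (n : ℕ) (i : Fin d) : (n * d + i) % d = i := by
  rw [Nat.add_comm, Nat.add_mul_mod_self_right, Nat.mod_eq_of_lt i.isLt]

lemma mul_add_fin_div (n : ℕ) (i : Fin d) : (n * d + i) / d = n := by
  rw [Nat.add_comm, Nat.add_mul_div_right _ _ i.pos, Nat.div_eq_of_lt i.isLt, Nat.zero_add]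

lemma mod_injOn_pts (x : Fin d → ℕ) : Set.InjOn (· % d) (pts d x) := by
  simp only [pts, Finset.coe_image, Finset.coe_univ, Set.image_univ]
  rintro _ ⟨i, rfl⟩ _ ⟨k, rfl⟩ h
  simp only [mul_add_fin_mod] at h
  rw [Fin.ext h]

lemma injective_mul_add_fin (x : Fin d → ℕ) : Function.Injective fun i : Fin d => x i * d + i :=
  fun i k h => Fin.ext <| by simpa only [mul_add_fin_mod] using congrArg (· % d) h

lemma sum_pts_div (x : Fin d → ℕ) : ∑ q ∈ pts d x, q / d = size x := by
  rw [pts, Finset.sum_image (injective_mul_add_fin x).injOn]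
  simp only [mul_add_fin_div, size]

lemma sortedPts_pairwise_lt (x : Fin d → ℕ) : (sortedPts d x).Pairwise (· < ·) :=
  (Finset.sortedLT_sort _).pairwise

lemma length_sortedPts (x : Fin d → ℕ) : (sortedPts d x).length = d := by
  rw [sortedPts, Finset.length_sort, pts,
    Finset.card_image_of_injective _ (injective_mul_add_fin x),
    Finset.card_univ, Fintype.card_fin]

end pts

lemma gOp_apply (d j : ℕ) (x : Fin d → ℕ) (i : Fin d) :
    gOp d j x i =
      ∑ q ∈ (((sortedPts d x).take (j - 1)).toFinset ∪
        ((sortedPts d x).drop (j - 1)).toFinset.image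
          (nextPt d (((sortedPts d x).drop (j - 1)).toFinset.image (· % d)))).filter
        (· % d = i), q / d := by
  simp only [gOp, List.toFinset, ← Multiset.map_coe, Multiset.toFinset_map]

end Spiral

open Spiral in
theorem statement7_general (d : ℕ) (hd : 1 ≤ d) (j : ℕ) (hjd : j ≤ d)
    (x : Fin d → ℕ) : size (gOp d j x) = size x + 1 := by
  set low := (sortedPts d x).take (j - 1)
  set high := (sortedPts d x).drop (j - 1)
  have hhigh : high.toFinset.Nonempty := by
    rw [List.toFinset_nonempty_iff, ← List.length_pos_iff, List.length_drop, length_sortedPts]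
    omega
  have hpts : low.toFinset ∪ high.toFinset = pts d x := by
    rw [← List.toFinset_append, List.take_append_drop, sortedPts, Finset.sort_toFinset]
  have hlow_lt_high : ∀ a ∈ low.toFinset, ∀ b ∈ high.toFinset, a < b := by
    simp only [List.mem_toFinset]
    have hsorted := sortedPts_pairwise_lt x
    rw [← List.take_append_drop (j - 1) (sortedPts d x), List.pairwise_append] at hsorted
    exact hsorted.2.2
  have hinj : Set.InjOn (· % d) high.toFinset :=
    (mod_injOn_pts x).mono (hpts ▸ Finset.subset_union_right)
  rw [size, funext (gOp_apply d j x), sum_fin_sum_filter_mod hd,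
    sum_div_union_image_nextPt hd hhigh hinj hlow_lt_high, hpts, sum_pts_div]

open Spiral in
/-- For every `x ∈ ℕ^d` and every `j ∈ [d]`, the size satisfies
`n(g_j(x)) = n(x) + 1`. -/
theorem statement7 (d : ℕ) (hd : 1 ≤ d) (j : ℕ) (hj1 : 1 ≤ j) (hjd : j ≤ d)
    (x : Fin d → ℕ) : size (gOp d j x) = size x + 1 :=
  statement7_general d hd j hjd x
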